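/- arXiv:2109.08619 — 2 statements merged into one kernel-verified Lean document; each statement's English description precedes it below -/
import Mathlib

section
/- Let K be a valued field of characteristic 0 and residue characteristic 0, and let A ⊂ K be a finite subset. For a ∈ A define D_a = {rv(a − v) : v ∈ A} ⊆ RV_K, where rv : K → K×/(1 + m_K) ∪ {0} is the leading-term map. Then for all a, a' ∈ A, a = a' if and only if D_a = D_{a'}. -/
/-- `rveq v lam x y` expresses `rv_lam x = rv_lam y` in the leading-term structure
`RV_lam = K^× / B_{<lam}(1) ∪ {0}`: for `x ≠ 0` it means `v (x - y) < lam * v x`,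
and `rv_lam 0 = 0` is only equal to `rv_lam y` for `y = 0`. -/
def rveq {K : Type*} [Field K] {Γ₀ : Type*} [LinearOrderedCommGroupWithZero Γ₀]
    (v : Valuation K Γ₀) (lam : Γ₀) (x y : K) : Prop :=
  v (x - y) < lam * v x ∨ (x = 0 ∧ y = 0)

section Aux

variable {K : Type*} [Field K] {Γ₀ : Type*} [LinearOrderedCommGroupWithZero Γ₀]
  (v : Valuation K Γ₀)

theorem rveq_refl (x : K) : rveq v 1 x x := by
  by_cases hx : x = 0
  · exact Or.inr ⟨hx, hx⟩
  · left
    simp only [sub_self, map_zero, one_mul]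
    exact zero_lt_iff.mpr ((Valuation.ne_zero_iff v).mpr hx)

theorem veq_of_rveq {x y : K} (h : rveq v 1 x y) : v x = v y := by
  rcases h with h | ⟨rfl, rfl⟩
  · rw [one_mul] at h
    have : v (x - (x - y)) = v x := Valuation.map_sub_eq_of_lt_left v h
    simpa using this.symm
  · rfl

theorem rveq_symm {x y : K} (h : rveq v 1 x y) : rveq v 1 y x := by
  have hxy := veq_of_rveq v h
  rcases h with h | ⟨rfl, rfl⟩
  · left
    rw [one_mul] at h ⊢
    rw [Valuation.map_sub_swap, ← hxy]
    exact h
  · exact Or.inr ⟨rfl, rfl⟩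

theorem rveq_trans {x y z : K} (h1 : rveq v 1 x y) (h2 : rveq v 1 y z) :
    rveq v 1 x z := by
  have hxy := veq_of_rveq v h1
  rcases h1 with h1 | ⟨rfl, rfl⟩
  · rw [one_mul] at h1
    rcases h2 with h2 | ⟨rfl, rfl⟩
    · rw [one_mul] at h2
      left
      rw [one_mul]
      have : x - z = (x - y) + (y - z) := by ring
      rw [this]
      exact lt_of_le_of_lt (Valuation.map_add v _ _)
        (max_lt h1 (hxy ▸ h2))
    · exact Or.inl (by rwa [one_mul])
  · rcases h2 with h2 | ⟨_, rfl⟩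
    · rw [one_mul, map_zero] at h2
      exact absurd h2 (by simp)
    · exact Or.inr ⟨rfl, rfl⟩

/-- The setoid on `K` given by `rveq v 1`. -/
def rvSetoid : Setoid K :=
  ⟨rveq v 1, ⟨rveq_refl v, fun h => rveq_symm v h, fun h1 h2 => rveq_trans v h1 h2⟩⟩

/-- Summing `g ∘ q` weighted by inverse fiber cardinalities gives the sum over the image. -/
theorem sum_div_fiber {K : Type*} [Field K] [CharZero K] {Q : Type*} [DecidableEq Q]
    (B : Finset K) (q : K → Q) (g : Q → K) :
    ∑ r ∈ B.image q, g r
      = ∑ u ∈ B, g (q u) * ((B.filter fun w => q w = q u).card : K)⁻¹ := by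
  refine Finset.sum_image' _ fun c hc => ?_
  have hcard : ((B.filter fun w => q w = q c).card : K) ≠ 0 := by
    have : (B.filter fun w => q w = q c).card ≠ 0 :=
      Finset.card_ne_zero_of_mem (Finset.mem_filter.mpr ⟨hc, rfl⟩)
    exact_mod_cast this
  rw [Finset.sum_congr rfl (g := fun u =>
      g (q c) * ((B.filter fun w => q w = q c).card : K)⁻¹) (fun u hu => ?_)]
  · rw [Finset.sum_const, nsmul_eq_mul]
    field_simp
  · obtain ⟨_, hq⟩ := Finset.mem_filter.mp hu
    simp_rw [hq]

end Aux

/-- equi-characteristic 0 case of Lemma `lem.finite`: for a finite `A ⊆ K`,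
letting `D_a = {rv (a - u) : u ∈ A}`, we have `a = a'` iff `D_a = D_{a'}` (for `a, a' ∈ A`).
Equality of the sets `D_a = D_{a'}` is spelled out via mutual containment. -/
theorem stmt4 {K : Type*} [Field K] [CharZero K] {Γ₀ : Type*}
    [LinearOrderedCommGroupWithZero Γ₀]
    (v : Valuation K Γ₀) (hres : ∀ n : ℤ, n ≠ 0 → v (n : K) = 1)
    (A : Finset K) :
    ∀ a ∈ A, ∀ a' ∈ A,
      (a = a' ↔
        ((∀ u ∈ A, ∃ u' ∈ A, rveq v 1 (a - u) (a' - u')) ∧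
         (∀ u' ∈ A, ∃ u ∈ A, rveq v 1 (a' - u') (a - u)))) := by
  classical
  intro a ha a' ha'
  constructor
  · rintro rfl
    exact ⟨fun u hu => ⟨u, hu, rveq_refl v _⟩, fun u hu => ⟨u, hu, rveq_refl v _⟩⟩
  · rintro ⟨h1, h2⟩
    by_contra hne
    -- setup
    set x : K := a - a' with hxdef
    have hx0 : x ≠ 0 := sub_ne_zero.mpr hne
    set γ : Γ₀ := v x with hγdef
    have hγ : γ ≠ 0 := (Valuation.ne_zero_iff v).mpr hx0
    have hγpos : (0 : Γ₀) < γ := zero_lt_iff.mpr hγ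
    -- valuation of natural numbers
    have hnat : ∀ n : ℕ, n ≠ 0 → v ((n : K)) = 1 := by
      intro n hn
      have := hres (n : ℤ) (by exact_mod_cast hn)
      rwa [Int.cast_natCast] at this
    -- the leading-term quotient
    let qa : K → Quotient (rvSetoid v) := fun u => Quotient.mk (rvSetoid v) (a - u)
    let qa' : K → Quotient (rvSetoid v) := fun u => Quotient.mk (rvSetoid v) (a' - u)
    let B : Finset K := A.filter fun u => v (a - u) = γ
    let B' : Finset K := A.filter fun u => v (a' - u) = γ
    -- basic transfer facts
    have f1 : ∀ u : K, v (a' - u) < γ → v (a - u) = γ := by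
      intro u hu
      have : a - u = x + (a' - u) := by rw [hxdef]; ring
      rw [this]
      exact Valuation.map_add_eq_of_lt_left v (by rwa [← hγdef])
    have f2 : ∀ u : K, v (a - u) < γ → v (a' - u) = γ := by
      intro u hu
      have hvx : v (-x) = γ := by rw [Valuation.map_neg]
      have : a' - u = -x + (a - u) := by rw [hxdef]; ring
      rw [this]
      rw [← hvx]
      exact Valuation.map_add_eq_of_lt_left v (by rwa [hvx])
    -- equality of the two image sets at level γ
    have himg : B.image qa = B'.image qa' := by
      ext r
      simp only [Finset.mem_image, Finset.mem_filter, B, B', qa, qa']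
      constructor
      · rintro ⟨u, ⟨huA, huγ⟩, rfl⟩
        obtain ⟨u', hu'A, hrv⟩ := h1 u huA
        refine ⟨u', ⟨hu'A, ?_⟩, (Quotient.sound hrv).symm⟩
        rw [← veq_of_rveq v hrv, huγ]
      · rintro ⟨u', ⟨hu'A, hu'γ⟩, rfl⟩
        obtain ⟨u, huA, hrv⟩ := h2 u' hu'A
        refine ⟨u, ⟨huA, ?_⟩, (Quotient.sound hrv).symm⟩
        rw [← veq_of_rveq v hrv, hu'γ]
    -- intrinsic class sizes
    let N : K → K := fun u => ((A.filter fun w => v (u - w) < γ).card : K)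
    have hNmem : ∀ u ∈ A, u ∈ A.filter fun w => v (u - w) < γ := by
      intro u hu
      exact Finset.mem_filter.mpr ⟨hu, by simpa using hγpos⟩
    have hNne : ∀ u ∈ A, N u ≠ 0 := by
      intro u hu
      have : (A.filter fun w => v (u - w) < γ).card ≠ 0 :=
        Finset.card_ne_zero_of_mem (hNmem u hu)
      simp only [N]
      exact_mod_cast this
    have hNval : ∀ u ∈ A, v (N u) = 1 := by
      intro u hu
      refine hnat _ (Finset.card_ne_zero_of_mem (hNmem u hu))
    have hNvalinv : ∀ u ∈ A, v ((N u)⁻¹) = 1 := by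
      intro u hu
      rw [map_inv₀, hNval u hu, inv_one]
    -- fibers of qa on B are the intrinsic classes
    have hfib : ∀ u ∈ B, (B.filter fun w => qa w = qa u)
        = A.filter fun w => v (u - w) < γ := by
      intro u hu
      obtain ⟨huA, huγ⟩ := Finset.mem_filter.mp hu
      ext w
      simp only [Finset.mem_filter, B, qa]
      constructor
      · rintro ⟨⟨hwA, hwγ⟩, heq⟩
        refine ⟨hwA, ?_⟩
        have hrv : rveq v 1 (a - w) (a - u) := Quotient.exact heq
        rcases hrv with hrv | ⟨hz, _⟩
        · rw [one_mul, hwγ] at hrv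
          have : (a - w) - (a - u) = u - w := by ring
          rwa [this] at hrv
        · exact absurd hz (by
            intro h0
            rw [h0, map_zero] at hwγ
            exact hγ hwγ.symm)
      · rintro ⟨hwA, hw⟩
        have hvw : v (a - w) = γ := by
          have : a - w = (a - u) + (u - w) := by ring
          rw [this, ← huγ]
          exact Valuation.map_add_eq_of_lt_left v (by rwa [huγ])
        refine ⟨⟨hwA, hvw⟩, Quotient.sound ?_⟩
        left
        rw [one_mul, hvw]
        have : (a - w) - (a - u) = u - w := by ring
        rwa [this]
    have hfib' : ∀ u ∈ B', (B'.filter fun w => qa' w = qa' u)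
        = A.filter fun w => v (u - w) < γ := by
      intro u hu
      obtain ⟨huA, huγ⟩ := Finset.mem_filter.mp hu
      ext w
      simp only [Finset.mem_filter, B', qa']
      constructor
      · rintro ⟨⟨hwA, hwγ⟩, heq⟩
        refine ⟨hwA, ?_⟩
        have hrv : rveq v 1 (a' - w) (a' - u) := Quotient.exact heq
        rcases hrv with hrv | ⟨hz, _⟩
        · rw [one_mul, hwγ] at hrv
          have : (a' - w) - (a' - u) = u - w := by ring
          rwa [this] at hrv
        · exact absurd hz (by
            intro h0
            rw [h0, map_zero] at hwγ
            exact hγ hwγ.symm)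
      · rintro ⟨hwA, hw⟩
        have hvw : v (a' - w) = γ := by
          have : a' - w = (a' - u) + (u - w) := by ring
          rw [this, ← huγ]
          exact Valuation.map_add_eq_of_lt_left v (by rwa [huγ])
        refine ⟨⟨hwA, hvw⟩, Quotient.sound ?_⟩
        left
        rw [one_mul, hvw]
        have : (a' - w) - (a' - u) = u - w := by ring
        rwa [this]
    -- the three sums
    let G : K := ∑ r ∈ B.image qa, Quotient.out r
    let Fa : K := ∑ u ∈ B, (a - u) * (N u)⁻¹
    let Fa' : K := ∑ u ∈ B', (a' - u) * (N u)⁻¹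
    -- G as a weighted sum over B
    have hGa : G = ∑ u ∈ B, (Quotient.out (qa u)) * (N u)⁻¹ := by
      rw [show G = ∑ r ∈ B.image qa, Quotient.out r from rfl,
        sum_div_fiber B qa Quotient.out]
      refine Finset.sum_congr rfl fun u hu => ?_
      rw [hfib u hu]
    have hGa' : G = ∑ u ∈ B', (Quotient.out (qa' u)) * (N u)⁻¹ := by
      rw [show G = ∑ r ∈ B.image qa, Quotient.out r from rfl, himg,
        sum_div_fiber B' qa' Quotient.out]
      refine Finset.sum_congr rfl fun u hu => ?_
      rw [hfib' u hu]
    -- out representative is close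
    have hout : ∀ u ∈ B, v ((a - u) - Quotient.out (qa u)) < γ := by
      intro u hu
      obtain ⟨huA, huγ⟩ := Finset.mem_filter.mp hu
      have hrv : rveq v 1 (Quotient.out (qa u)) (a - u) := @Quotient.mk_out K (rvSetoid v) (a - u)
      have hveq := veq_of_rveq v hrv
      rcases hrv with hrv | ⟨_, hz⟩
      · rw [one_mul, hveq, huγ] at hrv
        rwa [Valuation.map_sub_swap]
      · exact absurd hz (by
          intro h0
          rw [h0, map_zero] at huγ
          exact hγ huγ.symm)
    have hout' : ∀ u ∈ B', v ((a' - u) - Quotient.out (qa' u)) < γ := by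
      intro u hu
      obtain ⟨huA, huγ⟩ := Finset.mem_filter.mp hu
      have hrv : rveq v 1 (Quotient.out (qa' u)) (a' - u) := @Quotient.mk_out K (rvSetoid v) (a' - u)
      have hveq := veq_of_rveq v hrv
      rcases hrv with hrv | ⟨_, hz⟩
      · rw [one_mul, hveq, huγ] at hrv
        rwa [Valuation.map_sub_swap]
      · exact absurd hz (by
          intro h0
          rw [h0, map_zero] at huγ
          exact hγ huγ.symm)
    -- claim 1 : v (Fa - G) < γ
    have hclaim1 : v (Fa - G) < γ := by
      rw [show Fa = ∑ u ∈ B, (a - u) * (N u)⁻¹ from rfl, hGa, ← Finset.sum_sub_distrib]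
      refine Valuation.map_sum_lt v hγ fun u hu => ?_
      obtain ⟨huA, _⟩ := Finset.mem_filter.mp hu
      rw [show (a - u) * (N u)⁻¹ - Quotient.out (qa u) * (N u)⁻¹
          = ((a - u) - Quotient.out (qa u)) * (N u)⁻¹ by ring]
      rw [map_mul, hNvalinv u huA, mul_one]
      exact hout u hu
    have hclaim2 : v (Fa' - G) < γ := by
      rw [show Fa' = ∑ u ∈ B', (a' - u) * (N u)⁻¹ from rfl, hGa', ← Finset.sum_sub_distrib]
      refine Valuation.map_sum_lt v hγ fun u hu => ?_
      obtain ⟨huA, _⟩ := Finset.mem_filter.mp hu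
      rw [show (a' - u) * (N u)⁻¹ - Quotient.out (qa' u) * (N u)⁻¹
          = ((a' - u) - Quotient.out (qa' u)) * (N u)⁻¹ by ring]
      rw [map_mul, hNvalinv u huA, mul_one]
      exact hout' u hu
    -- decompositions of B and B'
    let B0 : Finset K := A.filter fun u => v (a' - u) < γ
    let B0' : Finset K := A.filter fun u => v (a - u) < γ
    let B2 : Finset K := A.filter fun u => v (a - u) = γ ∧ v (a' - u) = γ
    have hBsplit : B = B0 ∪ B2 := by
      ext u
      simp only [Finset.mem_union, Finset.mem_filter, B, B0, B2]
      constructor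
      · rintro ⟨huA, huγ⟩
        have hle : v (a' - u) ≤ γ := by
          have : a' - u = (a - u) - x := by rw [hxdef]; ring
          rw [this]
          refine le_trans (Valuation.map_sub v _ _) ?_
          rw [huγ, ← hγdef, max_self]
        rcases lt_or_eq_of_le hle with h | h
        · exact Or.inl ⟨huA, h⟩
        · exact Or.inr ⟨huA, huγ, h⟩
      · rintro (⟨huA, hu⟩ | ⟨huA, hu, _⟩)
        · exact ⟨huA, f1 u hu⟩
        · exact ⟨huA, hu⟩
    have hB'split : B' = B0' ∪ B2 := by
      ext u
      simp only [Finset.mem_union, Finset.mem_filter, B', B0', B2]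
      constructor
      · rintro ⟨huA, huγ⟩
        have hle : v (a - u) ≤ γ := by
          have : a - u = (a' - u) + x := by rw [hxdef]; ring
          rw [this]
          refine le_trans (Valuation.map_add v _ _) ?_
          rw [huγ, ← hγdef, max_self]
        rcases lt_or_eq_of_le hle with h | h
        · exact Or.inl ⟨huA, h⟩
        · exact Or.inr ⟨huA, h, huγ⟩
      · rintro (⟨huA, hu⟩ | ⟨huA, _, hu⟩)
        · exact ⟨huA, f2 u hu⟩
        · exact ⟨huA, hu⟩
    have hdisj : Disjoint B0 B2 := by
      rw [Finset.disjoint_left]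
      rintro u hu hu2
      obtain ⟨_, hlt⟩ := Finset.mem_filter.mp hu
      obtain ⟨_, _, heq⟩ := Finset.mem_filter.mp hu2
      rw [heq] at hlt
      exact lt_irrefl _ hlt
    have hdisj' : Disjoint B0' B2 := by
      rw [Finset.disjoint_left]
      rintro u hu hu2
      obtain ⟨_, hlt⟩ := Finset.mem_filter.mp hu
      obtain ⟨_, heq, _⟩ := Finset.mem_filter.mp hu2
      rw [heq] at hlt
      exact lt_irrefl _ hlt
    -- class of an element of B0 is B0
    have hclsB0 : ∀ u ∈ B0, (A.filter fun w => v (u - w) < γ) = B0 := by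
      intro u hu
      obtain ⟨huA, hult⟩ := Finset.mem_filter.mp hu
      ext w
      simp only [Finset.mem_filter, B0]
      constructor
      · rintro ⟨hwA, hw⟩
        refine ⟨hwA, ?_⟩
        have : a' - w = (a' - u) + (u - w) := by ring
        rw [this]
        exact lt_of_le_of_lt (Valuation.map_add v _ _) (max_lt hult hw)
      · rintro ⟨hwA, hw⟩
        refine ⟨hwA, ?_⟩
        have : u - w = (a' - w) - (a' - u) := by ring
        rw [this]
        exact lt_of_le_of_lt (Valuation.map_sub v _ _) (max_lt hw hult)
    have hclsB0' : ∀ u ∈ B0', (A.filter fun w => v (u - w) < γ) = B0' := by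
      intro u hu
      obtain ⟨huA, hult⟩ := Finset.mem_filter.mp hu
      ext w
      simp only [Finset.mem_filter, B0']
      constructor
      · rintro ⟨hwA, hw⟩
        refine ⟨hwA, ?_⟩
        have : a - w = (a - u) + (u - w) := by ring
        rw [this]
        exact lt_of_le_of_lt (Valuation.map_add v _ _) (max_lt hult hw)
      · rintro ⟨hwA, hw⟩
        refine ⟨hwA, ?_⟩
        have : u - w = (a - w) - (a - u) := by ring
        rw [this]
        exact lt_of_le_of_lt (Valuation.map_sub v _ _) (max_lt hw hult)
    have ha'B0 : a' ∈ B0 := Finset.mem_filter.mpr ⟨ha', by simpa using hγpos⟩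
    have haB0' : a ∈ B0' := Finset.mem_filter.mpr ⟨ha, by simpa using hγpos⟩
    have hB0card : ((B0.card : K)) ≠ 0 := by
      have : B0.card ≠ 0 := Finset.card_ne_zero_of_mem ha'B0
      exact_mod_cast this
    have hB0'card : ((B0'.card : K)) ≠ 0 := by
      have : B0'.card ≠ 0 := Finset.card_ne_zero_of_mem haB0'
      exact_mod_cast this
    -- sum over B0
    let ε : K := ∑ u ∈ B0, (a' - u) * ((B0.card : K))⁻¹
    let ε' : K := ∑ u ∈ B0', (a - u) * ((B0'.card : K))⁻¹
    have hsumB0 : ∑ u ∈ B0, (a - u) * (N u)⁻¹ = x + ε := by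
      have hNu : ∀ u ∈ B0, N u = (B0.card : K) := by
        intro u hu
        simp only [N]
        rw [hclsB0 u hu]
      rw [Finset.sum_congr rfl (g := fun u => x * ((B0.card : K))⁻¹
          + (a' - u) * ((B0.card : K))⁻¹) (fun u hu => by
        rw [hNu u hu, show a - u = x + (a' - u) by rw [hxdef]; ring, add_mul])]
      rw [Finset.sum_add_distrib, Finset.sum_const, nsmul_eq_mul]
      congr 1
      field_simp
    have hsumB0' : ∑ u ∈ B0', (a' - u) * (N u)⁻¹ = -x + ε' := by
      have hNu : ∀ u ∈ B0', N u = (B0'.card : K) := by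
        intro u hu
        simp only [N]
        rw [hclsB0' u hu]
      rw [Finset.sum_congr rfl (g := fun u => (-x) * ((B0'.card : K))⁻¹
          + (a - u) * ((B0'.card : K))⁻¹) (fun u hu => by
        rw [hNu u hu, show a' - u = -x + (a - u) by rw [hxdef]; ring, add_mul])]
      rw [Finset.sum_add_distrib, Finset.sum_const, nsmul_eq_mul]
      congr 1
      field_simp
    have hεlt : v ε < γ := by
      refine Valuation.map_sum_lt v hγ fun u hu => ?_
      obtain ⟨huA, hult⟩ := Finset.mem_filter.mp hu
      rw [map_mul, map_inv₀, hnat _ (Finset.card_ne_zero_of_mem ha'B0), inv_one, mul_one]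
      exact hult
    have hε'lt : v ε' < γ := by
      refine Valuation.map_sum_lt v hγ fun u hu => ?_
      obtain ⟨huA, hult⟩ := Finset.mem_filter.mp hu
      rw [map_mul, map_inv₀, hnat _ (Finset.card_ne_zero_of_mem haB0'), inv_one, mul_one]
      exact hult
    -- sum over B2 of inverse class sizes is the number of classes
    have hfib2 : ∀ u ∈ B2, (B2.filter fun w => qa w = qa u)
        = A.filter fun w => v (u - w) < γ := by
      intro u hu
      obtain ⟨huA, huγ, huγ'⟩ := Finset.mem_filter.mp hu
      ext w
      simp only [Finset.mem_filter, B2, qa]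
      constructor
      · rintro ⟨⟨hwA, hwγ, _⟩, heq⟩
        refine ⟨hwA, ?_⟩
        have hrv : rveq v 1 (a - w) (a - u) := Quotient.exact heq
        rcases hrv with hrv | ⟨hz, _⟩
        · rw [one_mul, hwγ] at hrv
          have : (a - w) - (a - u) = u - w := by ring
          rwa [this] at hrv
        · exact absurd hz (by
            intro h0
            rw [h0, map_zero] at hwγ
            exact hγ hwγ.symm)
      · rintro ⟨hwA, hw⟩
        have hvw : v (a - w) = γ := by
          have : a - w = (a - u) + (u - w) := by ring
          rw [this, ← huγ]
          exact Valuation.map_add_eq_of_lt_left v (by rwa [huγ])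
        have hvw' : v (a' - w) = γ := by
          have : a' - w = (a' - u) + (u - w) := by ring
          rw [this, ← huγ']
          exact Valuation.map_add_eq_of_lt_left v (by rwa [huγ'])
        refine ⟨⟨hwA, hvw, hvw'⟩, Quotient.sound ?_⟩
        left
        rw [one_mul, hvw]
        have : (a - w) - (a - u) = u - w := by ring
        rwa [this]
    have hsumB2inv : ∑ u ∈ B2, (N u)⁻¹ = ((B2.image qa).card : K) := by
      have hone : ((B2.image qa).card : K) = ∑ r ∈ B2.image qa, (1 : K) := by
        rw [Finset.sum_const, nsmul_eq_mul, mul_one]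
      rw [hone, sum_div_fiber B2 qa (fun _ => (1 : K))]
      refine Finset.sum_congr rfl fun u hu => ?_
      rw [one_mul, hfib2 u hu]
    -- claim 3 : v (Fa - Fa') = γ
    have hkey : Fa - Fa' = (((B2.image qa).card : K) + 2) * x + (ε - ε') := by
      have e1 : Fa = (x + ε) + ∑ u ∈ B2, (a - u) * (N u)⁻¹ := by
        rw [show Fa = ∑ u ∈ B, (a - u) * (N u)⁻¹ from rfl, hBsplit,
          Finset.sum_union hdisj, hsumB0]
      have e2 : Fa' = (-x + ε') + ∑ u ∈ B2, (a' - u) * (N u)⁻¹ := by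
        rw [show Fa' = ∑ u ∈ B', (a' - u) * (N u)⁻¹ from rfl, hB'split,
          Finset.sum_union hdisj', hsumB0']
      have e3 : ∑ u ∈ B2, (a - u) * (N u)⁻¹ - ∑ u ∈ B2, (a' - u) * (N u)⁻¹
          = ((B2.image qa).card : K) * x := by
        rw [← Finset.sum_sub_distrib]
        rw [Finset.sum_congr rfl (g := fun u => x * (N u)⁻¹) (fun u hu => by
          rw [show (a - u) * (N u)⁻¹ - (a' - u) * (N u)⁻¹
            = ((a - u) - (a' - u)) * (N u)⁻¹ by ring,
            show (a - u) - (a' - u) = x by rw [hxdef]; ring])]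
        rw [← Finset.mul_sum, hsumB2inv, mul_comm]
      rw [e1, e2]
      have : (x + ε) + (∑ u ∈ B2, (a - u) * (N u)⁻¹)
          - ((-x + ε') + ∑ u ∈ B2, (a' - u) * (N u)⁻¹)
          = (∑ u ∈ B2, (a - u) * (N u)⁻¹ - ∑ u ∈ B2, (a' - u) * (N u)⁻¹)
            + 2 * x + (ε - ε') := by ring
      rw [this, e3]
      ring
    have hvmain : v ((((B2.image qa).card : K) + 2) * x) = γ := by
      rw [map_mul, ← hγdef]
      have : (((B2.image qa).card : K) + 2) = (((B2.image qa).card + 2 : ℕ) : K) := by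
        push_cast; ring
      rw [this, hnat _ (by omega), one_mul]
    have hclaim3 : v (Fa - Fa') = γ := by
      rw [hkey, Valuation.map_add_eq_of_lt_left v]
      · exact hvmain
      · rw [hvmain]
        exact lt_of_le_of_lt (Valuation.map_sub v _ _) (max_lt hεlt hε'lt)
    -- contradiction
    have : v (Fa - Fa') < γ := by
      rw [show Fa - Fa' = (Fa - G) - (Fa' - G) by ring]
      exact lt_of_le_of_lt (Valuation.map_sub v _ _) (max_lt hclaim1 hclaim2)
    rw [hclaim3] at this
    exact lt_irrefl _ this
end

section
/- Let K be a countable valued field containing, for every n ≥ 1, an element a_n with |a_n| = λ_n where λ_1 > λ_2 > ... is a strictly decreasing sequence of values, and such that for finite I ⊆ {1,...,n}, the closed balls B_{≤λ_n}(a_I) with a_I = Σ_{i∈I} a_i form an infinite binary tree (B_{≤λ_n}(a_I) ⊇ B_{≤λ_{n+1}}(a_I) and B_{≤λ_n}(a_I) ⊇ B_{≤λ_{n+1}}(a_{I∪{n}}), and B_{≤λ_{n+1}}(a_I) ∩ B_{≤λ_{n+1}}(a_{I∪{n}}) = ∅). Then there exists a chain of closed balls B_1 ⊇ B_2 ⊇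 ... from this tree whose intersection in K is empty. -/
/-- in a countable valued field `K`, given elements `a n` with strictly
decreasing values `v (a n) = lam n`, such that the closed balls `B_{≤ lam n}(a_I)`
(`a_I = ∑ i ∈ I, a i`, `I ⊆ {0, ..., n-1}`) form an infinite binary tree (the two children
`B_{≤ lam (n+1)}(a_I)` and `B_{≤ lam (n+1)}(a_{I ∪ {n}})` of `B_{≤ lam n}(a_I)` are
disjoint), there is a branch, i.e. a chain of closed balls `B_{≤ lam n}(b n)` with each
`b n` of the form `a_I` for some `I ⊆ {0, ..., n-1}`, whose intersection in `K` is empty. -/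
theorem stmt10 {K : Type*} [Field K] [Countable K] {Γ₀ : Type*}
    [LinearOrderedCommGroupWithZero Γ₀]
    (v : Valuation K Γ₀) (lam : ℕ → Γ₀) (hlam : StrictAnti lam)
    (a : ℕ → K) (ha : ∀ n, v (a n) = lam n)
    (hdisj : ∀ n : ℕ, ∀ I : Finset ℕ, (∀ i ∈ I, i < n) →
      {x : K | v (x - ∑ i ∈ I, a i) ≤ lam (n + 1)} ∩
        {x : K | v (x - (∑ i ∈ I, a i + a n)) ≤ lam (n + 1)} = ∅) :
    ∃ b : ℕ → K,
      (∀ n, ∃ I : Finset ℕ, (∀ i ∈ I, i < n) ∧ b n = ∑ i ∈ I, a i) ∧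
      (∀ n, {x : K | v (x - b (n + 1)) ≤ lam (n + 1)} ⊆ {x : K | v (x - b n) ≤ lam n}) ∧
      (⋂ n : ℕ, {x : K | v (x - b n) ≤ lam n}) = ∅ := by
  classical
  set b : (ℕ → Bool) → ℕ → K := fun s n => ∑ i ∈ Finset.range n, if s i then a i else 0 with hb
  have hform : ∀ s n, ∃ I : Finset ℕ, (∀ i ∈ I, i < n) ∧ b s n = ∑ i ∈ I, a i := by
    intro s n
    refine ⟨(Finset.range n).filter (fun i => s i), ?_, ?_⟩
    · intro i hi; exact Finset.mem_range.mp (Finset.mem_filter.mp hi).1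
    · rw [Finset.sum_filter]
  have hsucc : ∀ s n, b s (n + 1) = b s n + (if s n then a n else 0) := by
    intro s n; simp [hb, Finset.sum_range_succ]
  have hnest : ∀ s n, {x : K | v (x - b s (n + 1)) ≤ lam (n + 1)} ⊆
      {x : K | v (x - b s n) ≤ lam n} := by
    intro s n x hx
    simp only [Set.mem_setOf_eq] at hx ⊢
    have hx' : x - b s n = (x - b s (n + 1)) + (if s n then a n else 0) := by
      rw [hsucc]; ring
    rw [hx']
    refine le_trans (v.map_add _ _) (max_le (le_trans hx (hlam (by omega)).le) ?_)
    split
    · exact (ha n).le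
    · simp
  by_contra hcon
  push_neg at hcon
  have hne : ∀ s : ℕ → Bool, ∃ x : K, ∀ n, v (x - b s n) ≤ lam n := by
    intro s
    obtain ⟨x, hx⟩ := hcon (b s) (hform s) (hnest s)
    exact ⟨x, fun n => by simpa using Set.mem_iInter.mp hx n⟩
  choose f hf using hne
  have key : ∀ s t : ℕ → Bool, ∀ n, (∀ i, i < n → s i = t i) → s n = false → t n = true →
      f s ≠ f t := by
    intro s t n hlt hs ht heq
    obtain ⟨I, hI, hbI⟩ := hform s n
    have hbst : b s n = b t n := by
      apply Finset.sum_congr rfl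
      intro i hi
      rw [hlt i (Finset.mem_range.mp hi)]
    have h1 : f s ∈ {x : K | v (x - ∑ i ∈ I, a i) ≤ lam (n + 1)} := by
      have := hf s (n + 1)
      rw [hsucc, hs] at this
      simpa [← hbI] using this
    have h2 : f s ∈ {x : K | v (x - (∑ i ∈ I, a i + a n)) ≤ lam (n + 1)} := by
      have := hf t (n + 1)
      rw [hsucc, ht, ← hbst, ← heq] at this
      simpa [← hbI] using this
    have := hdisj n I hI
    rw [Set.eq_empty_iff_forall_notMem] at this
    exact this (f s) ⟨h1, h2⟩
  have hinj : Function.Injective f := by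
    intro s t hst
    by_contra hne'
    have hex : ∃ n, s n ≠ t n := by
      by_contra h; push_neg at h; exact hne' (funext h)
    set n := Nat.find hex with hn
    have hsn : s n ≠ t n := Nat.find_spec hex
    have hlt : ∀ i, i < n → s i = t i := fun i hi => by
      have := Nat.find_min hex hi; simpa using this
    rcases Bool.eq_false_or_eq_true (s n) with h1 | h1 <;>
      rcases Bool.eq_false_or_eq_true (t n) with h2 | h2
    · exact hsn (h1.trans h2.symm)
    · exact key t s n (fun i hi => (hlt i hi).symm) h2 h1 hst.symm
    · exact key s t n hlt h1 h2 hst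
    · exact hsn (h1.trans h2.symm)
  have : Countable (ℕ → Bool) := hinj.countable
  have hc : Countable (Set ℕ) :=
    Countable.of_equiv _ (Equiv.arrowCongr (Equiv.refl ℕ) Equiv.propEquivBool.symm)
  obtain ⟨g, hg⟩ := (countable_iff_exists_injective (Set ℕ)).mp hc
  exact Function.cantor_injective g hg
end
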